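/- arXiv:2211.06599 — 3 statements merged into one kernel-verified Lean document; each statement's English description precedes it below -/
import Mathlib

section
/- Let (X, μ) be a nonatomic standard Borel probability space and let T be an ergodic automorphism of (X, μ). Then for every sequence ψ : ℕ → ℝ with ψ(N) > 0 for all N and ψ(N) → 0 as N → ∞, there exists a measurable set A ⊆ X such that, writing f = χ_A (the indicator of A) and a = μ(A), one has limsup_{N→∞} ‖f_N(T, ·) − a‖_{L¹(μ)} / ψ(N) = ∞. -/
open MeasureTheory Filter Set

/-- The Birkhoff (time) average `f_N(T, x) = (1/N) ∑_{i=1}^{N} f(T^i x)`. -/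
noncomputable def birkhoffAvg {X : Type*} (T : X → X) (f : X → ℝ) (N : ℕ) (x : X) : ℝ :=
  (N : ℝ)⁻¹ * ∑ i ∈ Finset.Icc 1 N, f (T^[i] x)

/-!
Since `ψ → 0`, it suffices to find one set `A` whose deviation `‖f_N - a‖₁` is at least
`16⁻ᵏ / 160` at times `N_k` chosen with `ψ(N_k) ≤ 16⁻ᵏ / (160 (k + 1))`.

Ergodicity and nonatomicity give almost invariant sets `B` (with `N μ(T⁻¹B ∆ B)` small) of any
small prescribed measure: the points that enter a tiny set within `L` steps. Averaging up to time
`N` barely moves the indicator of `B`, so its deviation is about `2 μ(B) (1 - μ(B))`. Flipping `A`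
on such a `B` (taking `A ∪ B` or `A \ B`) thus forces deviation of order `μ(B)` at time `N` while
moving `A` by at most `μ(B)`. Doing this at geometrically decreasing scales and passing to the
limit set, the later flips are too small to undo the earlier ones, because the deviation is
`2`-Lipschitz in `μ(A ∆ A')`.
-/

open scoped symmDiff

section BirkhoffAvg

variable {X : Type*} {T : X → X} {f g : X → ℝ} {N : ℕ}

lemma birkhoffAvg_sub (T : X → X) (f g : X → ℝ) (N : ℕ) :
    birkhoffAvg T (f - g) N = birkhoffAvg T f N - birkhoffAvg T g N := by
  ext x
  simp only [birkhoffAvg, Pi.sub_apply, Finset.sum_sub_distrib, mul_sub]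

lemma abs_birkhoffAvg_le (T : X → X) (f : X → ℝ) (N : ℕ) (x : X) :
    |birkhoffAvg T f N x| ≤ birkhoffAvg T (fun y => |f y|) N x := by
  rw [birkhoffAvg, birkhoffAvg, abs_mul, abs_of_nonneg (by positivity)]
  gcongr
  exact Finset.abs_sum_le_sum_abs _ _

lemma birkhoffAvg_sub_apply_self (hN : N ≠ 0) (x : X) :
    birkhoffAvg T f N x - f x = (N : ℝ)⁻¹ * ∑ i ∈ Finset.Icc 1 N, (f (T^[i] x) - f x) := by
  rw [birkhoffAvg, Finset.sum_sub_distrib, Finset.sum_const, Nat.card_Icc, Nat.add_sub_cancel,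
    nsmul_eq_mul, mul_sub, inv_mul_cancel_left₀ (Nat.cast_ne_zero.2 hN)]

variable [MeasurableSpace X] {μ : Measure X}

lemma MeasureTheory.MeasurePreserving.integral_comp_iterate (hT : MeasurePreserving T μ μ)
    (hf : AEStronglyMeasurable f μ) (i : ℕ) : ∫ x, f (T^[i] x) ∂μ = ∫ x, f x ∂μ := by
  have hTi := hT.iterate i
  rw [← integral_map hTi.measurable.aemeasurable (by rwa [hTi.map_eq]), hTi.map_eq]

lemma MeasureTheory.MeasurePreserving.integrable_comp_iterate (hT : MeasurePreserving T μ μ)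
    (hf : Integrable f μ) (i : ℕ) : Integrable (fun x => f (T^[i] x)) μ :=
  (hT.iterate i).integrable_comp_of_integrable hf

lemma integrable_birkhoffAvg (hT : MeasurePreserving T μ μ) (hf : Integrable f μ) (N : ℕ) :
    Integrable (birkhoffAvg T f N) μ :=
  (integrable_finsetSum _ fun i _ => hT.integrable_comp_iterate hf i).const_mul _

lemma integral_birkhoffAvg (hT : MeasurePreserving T μ μ) (hf : Integrable f μ) (hN : N ≠ 0) :
    ∫ x, birkhoffAvg T f N x ∂μ = ∫ x, f x ∂μ := by
  simp only [birkhoffAvg]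
  rw [integral_const_mul, integral_finsetSum _ fun i _ => hT.integrable_comp_iterate hf i]
  simp only [hT.integral_comp_iterate hf.aestronglyMeasurable, Finset.sum_const, Nat.card_Icc,
    Nat.add_sub_cancel, nsmul_eq_mul]
  rw [inv_mul_cancel_left₀ (Nat.cast_ne_zero.2 hN)]

lemma integral_abs_birkhoffAvg_le (hT : MeasurePreserving T μ μ) (hf : Integrable f μ) (N : ℕ) :
    ∫ x, |birkhoffAvg T f N x| ∂μ ≤ ∫ x, |f x| ∂μ := by
  rcases eq_or_ne N 0 with rfl | hN
  · simpa [birkhoffAvg] using integral_nonneg fun x => abs_nonneg (f x)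
  calc ∫ x, |birkhoffAvg T f N x| ∂μ ≤ ∫ x, birkhoffAvg T (fun y => |f y|) N x ∂μ :=
        integral_mono (integrable_birkhoffAvg hT hf N).abs (integrable_birkhoffAvg hT hf.abs N)
          (abs_birkhoffAvg_le T f N)
    _ = ∫ x, |f x| ∂μ := integral_birkhoffAvg hT hf.abs hN

/-- The increments telescope: `f ∘ T^[i+1] - f = (f ∘ T - f) ∘ T^[i] + (f ∘ T^[i] - f)`. -/
lemma integral_abs_comp_iterate_sub_le (hT : MeasurePreserving T μ μ) (hf : Integrable f μ)
    (i : ℕ) : ∫ x, |f (T^[i] x) - f x| ∂μ ≤ i * ∫ x, |f (T x) - f x| ∂μ := by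
  have hfT : Integrable (fun x => |f (T x) - f x|) μ :=
    (hT.integrable_comp_of_integrable hf |>.sub hf).abs
  induction i with
  | zero => simp
  | succ i ih =>
    have hfi : Integrable (fun x => |f (T^[i] x) - f x|) μ :=
      (hT.integrable_comp_iterate hf i |>.sub hf).abs
    calc ∫ x, |f (T^[i + 1] x) - f x| ∂μ
        ≤ ∫ x, (|f (T (T^[i] x)) - f (T^[i] x)| + |f (T^[i] x) - f x|) ∂μ := by
          refine integral_mono
            ((hT.integrable_comp_iterate hf (i + 1)).sub hf).abs
            (hT.integrable_comp_iterate hfT i |>.add hfi) fun x => ?_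
          rw [Function.iterate_succ_apply']
          exact abs_sub_le _ _ _
      _ = ∫ x, |f (T x) - f x| ∂μ + ∫ x, |f (T^[i] x) - f x| ∂μ := by
          rw [integral_add (hT.integrable_comp_iterate hfT i) hfi,
            hT.integral_comp_iterate hfT.aestronglyMeasurable]
      _ ≤ (i + 1 : ℕ) * ∫ x, |f (T x) - f x| ∂μ := by
          push_cast
          linarith

lemma integral_abs_birkhoffAvg_sub_le (hT : MeasurePreserving T μ μ) (hf : Integrable f μ)
    (hN : N ≠ 0) :
    ∫ x, |birkhoffAvg T f N x - f x| ∂μ ≤ N * ∫ x, |f (T x) - f x| ∂μ := by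
  have hint : ∀ i, Integrable (fun x => |f (T^[i] x) - f x|) μ := fun i =>
    (hT.integrable_comp_iterate hf i |>.sub hf).abs
  calc ∫ x, |birkhoffAvg T f N x - f x| ∂μ
      ≤ ∫ x, (N : ℝ)⁻¹ * ∑ i ∈ Finset.Icc 1 N, |f (T^[i] x) - f x| ∂μ := by
        refine integral_mono ((integrable_birkhoffAvg hT hf N).sub hf).abs
          ((integrable_finsetSum _ fun i _ => hint i).const_mul _) fun x => ?_
        rw [birkhoffAvg_sub_apply_self hN, abs_mul, abs_of_nonneg (by positivity)]
        exact mul_le_mul_of_nonneg_left (Finset.abs_sum_le_sum_abs _ _) (by positivity)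
    _ = (N : ℝ)⁻¹ * ∑ i ∈ Finset.Icc 1 N, ∫ x, |f (T^[i] x) - f x| ∂μ := by
        rw [integral_const_mul, integral_finsetSum _ fun i _ => hint i]
    _ ≤ (N : ℝ)⁻¹ * ∑ _i ∈ Finset.Icc 1 N, N * ∫ x, |f (T x) - f x| ∂μ := by
        gcongr with i hi
        refine (integral_abs_comp_iterate_sub_le hT hf i).trans ?_
        gcongr
        exact_mod_cast (Finset.mem_Icc.1 hi).2
    _ = N * ∫ x, |f (T x) - f x| ∂μ := by
        rw [Finset.sum_const, Nat.card_Icc, Nat.add_sub_cancel, nsmul_eq_mul,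
          inv_mul_cancel_left₀ (Nat.cast_ne_zero.2 hN)]

end BirkhoffAvg

section Deviation

variable {X : Type*} [MeasurableSpace X] {μ : Measure X} [IsProbabilityMeasure μ]
  {T : X → X} {f g : X → ℝ} {N : ℕ}

noncomputable def birkhoffDeviation (μ : Measure X) (T : X → X) (f : X → ℝ) (N : ℕ) : ℝ :=
  ∫ x, |birkhoffAvg T f N x - ∫ y, f y ∂μ| ∂μ

lemma integrable_abs_birkhoffAvg_sub_const (hT : MeasurePreserving T μ μ) (hf : Integrable f μ)
    (N : ℕ) (c : ℝ) : Integrable (fun x => |birkhoffAvg T f N x - c|) μ :=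
  ((integrable_birkhoffAvg hT hf N).sub (integrable_const c)).abs

lemma birkhoffDeviation_sub_le (hT : MeasurePreserving T μ μ) (hf : Integrable f μ)
    (hg : Integrable g μ) :
    birkhoffDeviation μ T (f - g) N ≤ birkhoffDeviation μ T f N + birkhoffDeviation μ T g N := by
  have hfN := integrable_abs_birkhoffAvg_sub_const hT hf N (∫ y, f y ∂μ)
  have hgN := integrable_abs_birkhoffAvg_sub_const hT hg N (∫ y, g y ∂μ)
  rw [birkhoffDeviation, birkhoffDeviation, birkhoffDeviation, ← integral_add hfN hgN]
  refine integral_mono (integrable_abs_birkhoffAvg_sub_const hT (hf.sub hg) N _) (hfN.add hgN)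
    fun x => ?_
  rw [birkhoffAvg_sub, integral_sub' hf hg]
  calc _ = |(birkhoffAvg T f N x - ∫ y, f y ∂μ) - (birkhoffAvg T g N x - ∫ y, g y ∂μ)| := by
        congr 1
        simp only [Pi.sub_apply]
        ring
    _ ≤ _ := abs_sub _ _

lemma birkhoffDeviation_le_add (hT : MeasurePreserving T μ μ) (hf : Integrable f μ)
    (hg : Integrable g μ) :
    birkhoffDeviation μ T g N ≤ birkhoffDeviation μ T f N + 2 * ∫ x, |g x - f x| ∂μ := by
  have hgf : Integrable (g - f) μ := hg.sub hf
  have hclose : |∫ x, g x ∂μ - ∫ x, f x ∂μ| ≤ ∫ x, |g x - f x| ∂μ := by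
    rw [← integral_sub hg hf]
    exact abs_integral_le_integral_abs
  have hfN := integrable_abs_birkhoffAvg_sub_const hT hf N (∫ y, f y ∂μ)
  have hrest : Integrable
      (fun x => |birkhoffAvg T (g - f) N x| + |∫ y, g y ∂μ - ∫ y, f y ∂μ|) μ :=
    (integrable_birkhoffAvg hT hgf N).abs.add (integrable_const _)
  calc birkhoffDeviation μ T g N
      ≤ ∫ x, (|birkhoffAvg T f N x - ∫ y, f y ∂μ|
          + (|birkhoffAvg T (g - f) N x| + |∫ y, g y ∂μ - ∫ y, f y ∂μ|)) ∂μ := by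
        refine integral_mono (integrable_abs_birkhoffAvg_sub_const hT hg N _) (hfN.add hrest)
          fun x => ?_
        rw [birkhoffAvg_sub, Pi.sub_apply]
        calc _ = |(birkhoffAvg T f N x - ∫ y, f y ∂μ) + ((birkhoffAvg T g N x
                - birkhoffAvg T f N x) - (∫ y, g y ∂μ - ∫ y, f y ∂μ))| := by
              congr 1
              ring
          _ ≤ _ := (abs_add_le _ _).trans (by gcongr; exact abs_sub _ _)
    _ = birkhoffDeviation μ T f N
          + (∫ x, |birkhoffAvg T (g - f) N x| ∂μ + |∫ y, g y ∂μ - ∫ y, f y ∂μ|) := by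
        rw [integral_add hfN hrest, integral_add (integrable_birkhoffAvg hT hgf N).abs
          (integrable_const _), integral_const, probReal_univ, one_smul, birkhoffDeviation]
    _ ≤ birkhoffDeviation μ T f N + (∫ x, |g x - f x| ∂μ + ∫ x, |g x - f x| ∂μ) := by
        gcongr _ + (?_ + ?_)
        exact integral_abs_birkhoffAvg_le hT hgf N
    _ = _ := by ring

lemma integral_abs_sub_integral_le (hT : MeasurePreserving T μ μ) (hf : Integrable f μ)
    (hN : N ≠ 0) :
    ∫ x, |f x - ∫ y, f y ∂μ| ∂μ ≤ birkhoffDeviation μ T f N + N * ∫ x, |f (T x) - f x| ∂μ := by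
  have hfN := integrable_abs_birkhoffAvg_sub_const hT hf N (∫ y, f y ∂μ)
  have hdiff : Integrable (fun x => |birkhoffAvg T f N x - f x|) μ :=
    ((integrable_birkhoffAvg hT hf N).sub hf).abs
  calc ∫ x, |f x - ∫ y, f y ∂μ| ∂μ
      ≤ ∫ x, (|birkhoffAvg T f N x - ∫ y, f y ∂μ| + |birkhoffAvg T f N x - f x|) ∂μ := by
        refine integral_mono (hf.sub (integrable_const _)).abs (hfN.add hdiff) fun x => ?_
        calc _ = |(birkhoffAvg T f N x - ∫ y, f y ∂μ) - (birkhoffAvg T f N x - f x)| := by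
              congr 1
              ring
          _ ≤ _ := abs_sub _ _
    _ = birkhoffDeviation μ T f N + ∫ x, |birkhoffAvg T f N x - f x| ∂μ :=
        integral_add hfN hdiff
    _ ≤ _ := by
        gcongr
        exact integral_abs_birkhoffAvg_sub_le hT hf hN

end Deviation

section Indicator

variable {X : Type*} [MeasurableSpace X] {μ : Measure X} {T : X → X} {s t : Set X} {N : ℕ}

lemma integrable_indicator_one [IsFiniteMeasure μ] (hs : MeasurableSet s) :
    Integrable (s.indicator (1 : X → ℝ)) μ :=
  (integrable_const 1).indicator hs

lemma integral_abs_indicator_sub_indicator (hs : MeasurableSet s) (ht : MeasurableSet t) :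
    ∫ x, |s.indicator (1 : X → ℝ) x - t.indicator 1 x| ∂μ = μ.real (s ∆ t) := by
  have hpt (x : X) : |s.indicator (1 : X → ℝ) x - t.indicator 1 x| = (s ∆ t).indicator 1 x := by
    rw [← abs_indicator_symmDiff]
    exact abs_of_nonneg (indicator_nonneg (fun _ _ => zero_le_one) x)
  simp_rw [hpt]
  exact integral_indicator_one (hs.symmDiff ht)

lemma birkhoffDeviation_indicator (hs : MeasurableSet s) :
    birkhoffDeviation μ T (s.indicator 1) N
      = ∫ x, |birkhoffAvg T (s.indicator 1) N x - μ.real s| ∂μ := by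
  rw [birkhoffDeviation, integral_indicator_one hs]

lemma integral_abs_indicator_sub_measureReal [IsProbabilityMeasure μ] (hs : MeasurableSet s) :
    ∫ x, |s.indicator (1 : X → ℝ) x - μ.real s| ∂μ = 2 * μ.real s * (1 - μ.real s) := by
  have hb1 : μ.real s ≤ 1 := measureReal_le_one
  have hpt : ∀ x, |s.indicator (1 : X → ℝ) x - μ.real s|
      = (1 - 2 * μ.real s) * s.indicator 1 x + μ.real s := by
    intro x
    by_cases hx : x ∈ s
    · rw [indicator_of_mem hx, Pi.one_apply, abs_of_nonneg (by linarith)]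
      ring
    · rw [indicator_of_notMem hx, zero_sub, abs_neg, abs_of_nonneg measureReal_nonneg]
      ring
  simp_rw [hpt]
  rw [integral_add ((integrable_indicator_one hs).const_mul _) (integrable_const _),
    integral_const_mul, integral_indicator_one hs, integral_const, probReal_univ, smul_eq_mul,
    one_mul]
  ring

omit [MeasurableSpace X] in
lemma indicator_union_sub_indicator_diff (s t : Set X) :
    (s ∪ t).indicator (1 : X → ℝ) - (s \ t).indicator 1 = t.indicator 1 := by
  rw [← sdiff_union_self, indicator_union_of_disjoint disjoint_sdiff_left]
  ext x
  simp

/-- Averaging up to time `N` moves the indicator of `s` by at most `N μ(T⁻¹s ∆ s)` in `L¹`, while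
the indicator is at `L¹` distance `2b(1-b)` from its mean `b`. -/
lemma le_birkhoffDeviation_indicator [IsProbabilityMeasure μ] (hT : MeasurePreserving T μ μ)
    (hs : MeasurableSet s) (hN : N ≠ 0) :
    2 * μ.real s * (1 - μ.real s) - N * μ.real ((T ⁻¹' s) ∆ s)
      ≤ birkhoffDeviation μ T (s.indicator 1) N := by
  have h := integral_abs_sub_integral_le hT (integrable_indicator_one hs) hN
  have hshift : ∫ x, |s.indicator (1 : X → ℝ) (T x) - s.indicator 1 x| ∂μ
      = μ.real ((T ⁻¹' s) ∆ s) := by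
    rw [← integral_abs_indicator_sub_indicator (hT.measurable hs) hs]
    simp_rw [← indicator_comp_right, Pi.one_comp]
  rw [integral_indicator_one hs, integral_abs_indicator_sub_measureReal hs, hshift] at h
  linarith

lemma birkhoffDeviation_indicator_le_union_add_diff [IsProbabilityMeasure μ]
    (hT : MeasurePreserving T μ μ) (hs : MeasurableSet s) (ht : MeasurableSet t) :
    birkhoffDeviation μ T (t.indicator 1) N ≤ birkhoffDeviation μ T ((s ∪ t).indicator 1) N
      + birkhoffDeviation μ T ((s \ t).indicator 1) N := by
  rw [← indicator_union_sub_indicator_diff s t]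
  exact birkhoffDeviation_sub_le hT (integrable_indicator_one (hs.union ht))
    (integrable_indicator_one (hs.diff ht))

end Indicator

section Nonatomic

open ProbabilityTheory

lemma continuous_cdf (ν : Measure ℝ) [IsProbabilityMeasure ν] [NullSingletonClass ν] :
    Continuous (cdf ν) := by
  refine continuous_iff_continuousAt.2 fun a => continuousAt_iff_continuous_left'_right'.2
    ⟨?_, ((cdf ν).right_continuous a).mono Ioi_subset_Ici_self⟩
  refine (monotone_cdf ν).continuousWithinAt_Iio_iff_leftLim_eq.2 ?_
  have h := (cdf ν).measure_singleton a
  rw [measure_cdf, measure_singleton, eq_comm, ENNReal.ofReal_eq_zero, sub_nonpos] at h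
  exact le_antisymm ((monotone_cdf ν).leftLim_le le_rfl) h

lemma exists_cdf_eq (ν : Measure ℝ) [IsProbabilityMeasure ν] [NullSingletonClass ν] {p : ℝ}
    (hp0 : 0 < p) (hp1 : p < 1) : ∃ t, cdf ν t = p := by
  obtain ⟨a, ha⟩ := ((tendsto_cdf_atBot ν).eventually (eventually_lt_nhds hp0)).exists
  obtain ⟨b, hb⟩ := ((tendsto_cdf_atTop ν).eventually (eventually_gt_nhds hp1)).exists
  exact intermediate_value_univ a b (continuous_cdf ν) ⟨ha.le, hb.le⟩

/-- Transport `μ` to `ℝ`, where its distribution function is continuous. -/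
lemma exists_measurableSet_measureReal_eq {X : Type*} [MeasurableSpace X] [StandardBorelSpace X]
    (μ : Measure X) [IsProbabilityMeasure μ] [NullSingletonClass μ] {p : ℝ} (hp0 : 0 < p)
    (hp1 : p < 1) : ∃ E, MeasurableSet E ∧ μ.real E = p := by
  have he := measurableEmbedding_embeddingReal X
  have : IsProbabilityMeasure (μ.map (embeddingReal X)) :=
    Measure.isProbabilityMeasure_map he.measurable.aemeasurable
  have : NullSingletonClass (μ.map (embeddingReal X)) := ⟨fun y => by
    rw [he.map_apply]
    exact (subsingleton_singleton.preimage he.injective).measure_zero μ⟩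
  obtain ⟨t, ht⟩ := exists_cdf_eq (μ.map (embeddingReal X)) hp0 hp1
  refine ⟨embeddingReal X ⁻¹' Iic t, he.measurable measurableSet_Iic, ?_⟩
  rw [← ht, cdf_eq_real, map_measureReal_apply he.measurable measurableSet_Iic]

end Nonatomic

lemma exists_lt_le_add_of_le_add {a : ℕ → ℝ} {c δ : ℝ} (h0 : a 0 ≤ c)
    (hstep : ∀ n, a (n + 1) ≤ a n + δ) (hc : ∃ n, c < a n) : ∃ n, c < a n ∧ a n ≤ c + δ := by
  classical
  obtain ⟨m, hm⟩ : ∃ m, Nat.find hc = m + 1 :=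
    Nat.exists_eq_succ_of_ne_zero fun h => (h ▸ Nat.find_spec hc).not_ge h0
  refine ⟨m + 1, hm ▸ Nat.find_spec hc, ?_⟩
  have : a m ≤ c := not_lt.1 (Nat.find_min hc (by omega))
  linarith [hstep m]

section Ergodic

variable {X : Type*} [MeasurableSpace X] {μ : Measure X} {T : X → X} {E : Set X}

lemma Ergodic.measure_iUnion_preimage_iterate [IsFiniteMeasure μ] (hT : Ergodic T μ)
    (hE : MeasurableSet E) (hE0 : μ E ≠ 0) : μ (⋃ j, T^[j] ⁻¹' E) = μ univ := by
  have hV : MeasurableSet (⋃ j, T^[j] ⁻¹' E) :=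
    MeasurableSet.iUnion fun j => hT.measurable.iterate j hE
  have hsub : T ⁻¹' (⋃ j, T^[j] ⁻¹' E) ⊆ ⋃ j, T^[j] ⁻¹' E := by
    simp only [preimage_iUnion, ← preimage_comp, ← Function.iterate_succ]
    exact iUnion_subset fun j => subset_iUnion (fun j => T^[j] ⁻¹' E) (j + 1)
  rcases hT.ae_empty_or_univ_of_preimage_ae_le hV.nullMeasurableSet hsub.eventuallyLE with h | h
  · exact absurd (measure_mono_null (subset_iUnion (fun j => T^[j] ⁻¹' E) 0) (ae_eq_empty.1 h))
      hE0
  · exact measure_congr h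

/-- The set of points entering `E` within `L` steps is almost invariant: it changes only on
`E ∪ T^[L] ⁻¹' E` under `T ⁻¹'`. By ergodicity these sets exhaust the space, and they grow by at
most `μ E` at each step. -/
lemma Ergodic.exists_measureReal_preimage_symmDiff_le [IsFiniteMeasure μ] (hT : Ergodic T μ)
    (hE : MeasurableSet E) (hE0 : μ E ≠ 0) {c : ℝ} (hc0 : 0 ≤ c) (hc : c < μ.real univ) :
    ∃ B, MeasurableSet B ∧ c < μ.real B ∧ μ.real B ≤ c + μ.real E ∧
      μ.real ((T ⁻¹' B) ∆ B) ≤ 2 * μ.real E := by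
  set W : ℕ → Set X := fun L => ⋃ j < L, T^[j] ⁻¹' E with hW
  have hμpre (j : ℕ) : μ.real (T^[j] ⁻¹' E) = μ.real E :=
    (hT.iterate j).measureReal_preimage hE.nullMeasurableSet
  have hsucc (L : ℕ) : W (L + 1) = W L ∪ T^[L] ⁻¹' E := biUnion_lt_succ _ L
  have hsucc' (L : ℕ) : W (L + 1) = E ∪ T ⁻¹' W L := by
    simp only [hW, biUnion_lt_succ', preimage_iUnion, ← preimage_comp, ← Function.iterate_succ]
    rfl
  have hlim : Tendsto (fun L => μ.real (W L)) atTop (nhds (μ.real univ)) := by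
    have hmono : Monotone W := fun a b hab =>
      biUnion_mono (fun j (hj : j < a) => lt_of_lt_of_le hj hab) fun _ _ => subset_rfl
    have h := tendsto_measure_iUnion_atTop (μ := μ) hmono
    rw [hW, biUnion_lt_eq_iUnion, hT.measure_iUnion_preimage_iterate hE hE0] at h
    exact (ENNReal.tendsto_toReal (measure_ne_top μ univ)).comp h
  obtain ⟨L, hcL, hLc⟩ := exists_lt_le_add_of_le_add (a := fun L => μ.real (W L)) (δ := μ.real E)
    (by simpa [hW] using hc0)
    (fun L => by rw [hsucc, ← hμpre L]; exact measureReal_union_le _ _)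
    (hlim.eventually (lt_mem_nhds hc)).exists
  refine ⟨W L, MeasurableSet.biUnion (to_countable _) fun j _ => hT.measurable.iterate j hE,
    hcL, hLc, ?_⟩
  have hsd : (T ⁻¹' W L) ∆ W L ⊆ E ∪ T^[L] ⁻¹' E := by
    rintro x (⟨hx, hx'⟩ | ⟨hx, hx'⟩)
    · have h : x ∈ W (L + 1) := hsucc' L ▸ Or.inr hx
      rw [hsucc] at h
      exact Or.inr (h.resolve_left hx')
    · have h : x ∈ W (L + 1) := hsucc L ▸ Or.inl hx
      rw [hsucc'] at h
      exact Or.inl (h.resolve_right hx')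
  calc μ.real ((T ⁻¹' W L) ∆ W L) ≤ μ.real (E ∪ T^[L] ⁻¹' E) := measureReal_mono hsd
    _ ≤ μ.real E + μ.real (T^[L] ⁻¹' E) := measureReal_union_le _ _
    _ = 2 * μ.real E := by rw [hμpre]; ring

end Ergodic

lemma liminf_symmDiff_subset {α : Type*} (s : ℕ → Set α) (m : ℕ) :
    liminf s atTop ∆ s m ⊆ ⋃ i, s (m + i + 1) ∆ s (m + i) := by
  intro x hx
  by_contra hx'
  simp only [mem_iUnion, not_exists] at hx'
  have hstable (i : ℕ) : x ∈ s (m + i) ↔ x ∈ s m := by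
    induction i with
    | zero => rfl
    | succ i ih =>
      rw [← ih, ← add_assoc]
      by_contra hne
      exact hx' i (by rw [mem_symmDiff]; tauto)
  have hlim : x ∈ liminf s atTop ↔ x ∈ s m := by
    rw [mem_liminf_iff_eventually_mem]
    constructor
    · intro h
      obtain ⟨i, hi⟩ := ((tendsto_add_atTop_nat m).eventually h).exists
      exact (hstable i).1 (by rwa [add_comm])
    · intro h
      filter_upwards [eventually_ge_atTop m] with n hn
      obtain ⟨i, rfl⟩ := Nat.exists_eq_add_of_le hn
      exact (hstable i).2 h
  rcases hx with ⟨hx, hxm⟩ | ⟨hxm, hx⟩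
  · exact hxm (hlim.1 hx)
  · exact hx (hlim.2 hxm)

lemma measureReal_liminf_symmDiff_le {α : Type*} [MeasurableSpace α] {μ : Measure α}
    [IsFiniteMeasure μ] {s : ℕ → Set α} {C r : ℝ} (hC : 0 ≤ C) (hr0 : 0 ≤ r) (hr1 : r < 1)
    (h : ∀ n, μ.real (s (n + 1) ∆ s n) ≤ C * r ^ n) (m : ℕ) :
    μ.real (liminf s atTop ∆ s m) ≤ C * r ^ m / (1 - r) := by
  have hsum : HasSum (fun i => C * r ^ (m + i)) (C * r ^ m / (1 - r)) := by
    simp_rw [pow_add, ← mul_assoc, div_eq_mul_inv]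
    exact (hasSum_geometric_of_lt_one hr0 hr1).mul_left _
  refine ENNReal.toReal_le_of_le_ofReal (hsum.nonneg fun i => by positivity) ?_
  calc μ (liminf s atTop ∆ s m) ≤ μ (⋃ i, s (m + i + 1) ∆ s (m + i)) :=
        measure_mono (liminf_symmDiff_subset s m)
    _ ≤ ∑' i, μ (s (m + i + 1) ∆ s (m + i)) := measure_iUnion_le _
    _ ≤ ∑' i, ENNReal.ofReal (C * r ^ (m + i)) := ENNReal.tsum_le_tsum fun i =>
        (ENNReal.le_ofReal_iff_toReal_le (measure_ne_top _ _) (by positivity)).2 (h (m + i))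
    _ = ENNReal.ofReal (C * r ^ m / (1 - r)) := by
        rw [← hsum.tsum_eq, ENNReal.ofReal_tsum_of_nonneg (fun i => by positivity) hsum.summable]

section Construction

variable {X : Type*} [MeasurableSpace X] [StandardBorelSpace X] {μ : Measure X}
  [IsProbabilityMeasure μ] [NullSingletonClass μ] {T : X → X} {A : Set X} {N : ℕ}

lemma Ergodic.exists_measureReal_mem_Ioc_preimage_symmDiff_le (hT : Ergodic T μ) {β ε : ℝ}
    (hβ0 : 0 < β) (hβ1 : β ≤ 1) (hε : 0 < ε) :
    ∃ B, MeasurableSet B ∧ μ.real B ∈ Ioc (β / 2) β ∧ μ.real ((T ⁻¹' B) ∆ B) ≤ ε := by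
  obtain ⟨E, hE, hμE⟩ := exists_measurableSet_measureReal_eq μ (p := min (β / 2) (ε / 2))
    (lt_min (by linarith) (by linarith)) ((min_le_left _ _).trans_lt (by linarith))
  have hE0 : μ E ≠ 0 := fun h => by
    rw [measureReal_def, h, ENNReal.toReal_zero] at hμE
    exact (lt_min (half_pos hβ0) (half_pos hε)).ne hμE
  obtain ⟨B, hB, hlow, hup, hsd⟩ := hT.exists_measureReal_preimage_symmDiff_le hE hE0
    (half_pos hβ0).le (by rw [probReal_univ]; linarith)
  refine ⟨B, hB, ⟨hlow, ?_⟩, ?_⟩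
  · linarith [min_le_left (β / 2) (ε / 2)]
  · linarith [min_le_right (β / 2) (ε / 2)]

/-- The indicator of an almost invariant `B` of measure about `β`, whose deviation is about `β`,
is the difference of those of `A ∪ B` and `A \ B`; one of them carries half of it. -/
lemma Ergodic.exists_measureReal_symmDiff_le_birkhoffDeviation_ge (hT : Ergodic T μ)
    (hA : MeasurableSet A) (hN : N ≠ 0) {β : ℝ} (hβ0 : 0 < β) (hβ : β ≤ 1 / 4) :
    ∃ A', MeasurableSet A' ∧ μ.real (A' ∆ A) ≤ β ∧
      β / 4 ≤ birkhoffDeviation μ T (A'.indicator 1) N := by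
  have hNpos : (0 : ℝ) < N := Nat.cast_pos.2 (Nat.pos_of_ne_zero hN)
  obtain ⟨B, hB, ⟨hlow, hup⟩, hsd⟩ :=
    hT.exists_measureReal_mem_Ioc_preimage_symmDiff_le hβ0 (by linarith)
      (show 0 < β / (4 * N) by positivity)
  have hdevB : β / 2 ≤ birkhoffDeviation μ T (B.indicator 1) N := by
    have h := le_birkhoffDeviation_indicator hT.toMeasurePreserving hB hN
    have hNsd : N * μ.real ((T ⁻¹' B) ∆ B) ≤ β / 4 := by
      rw [le_div_iff₀ (by positivity)] at hsd
      linarith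
    nlinarith
  have hsplit := birkhoffDeviation_indicator_le_union_add_diff (N := N) hT.toMeasurePreserving hA hB
  by_cases hunion : β / 4 ≤ birkhoffDeviation μ T ((A ∪ B).indicator 1) N
  · refine ⟨A ∪ B, hA.union hB, (measureReal_mono fun x hx => ?_).trans hup, hunion⟩
    simp only [mem_symmDiff, mem_union] at hx
    tauto
  · refine ⟨A \ B, hA.diff hB, (measureReal_mono fun x hx => ?_).trans hup, by linarith⟩
    simp only [mem_symmDiff, Set.mem_sdiff] at hx
    tauto

/-- Flip at scales `16⁻¹ ^ (k + 1)`: all flips after step `k` move the set by at most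
`16⁻¹ ^ k / 240`, too little to destroy the deviation `16⁻¹ ^ k / 64` created at step `k`. -/
lemma Ergodic.exists_measurableSet_forall_birkhoffDeviation_ge (hT : Ergodic T μ) (N : ℕ → ℕ)
    (hN : ∀ k, N k ≠ 0) :
    ∃ A, MeasurableSet A ∧
      ∀ k, (16 : ℝ)⁻¹ ^ k / 160 ≤ birkhoffDeviation μ T (A.indicator 1) (N k) := by
  have step (k : ℕ) (A : {B : Set X // MeasurableSet B}) : ∃ A' : {B : Set X // MeasurableSet B},
      μ.real (A'.1 ∆ A.1) ≤ 16⁻¹ * 16⁻¹ ^ k ∧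
        (16 : ℝ)⁻¹ ^ k / 64 ≤ birkhoffDeviation μ T (A'.1.indicator 1) (N k) := by
    obtain ⟨A', hA', hclose, hdev⟩ := hT.exists_measureReal_symmDiff_le_birkhoffDeviation_ge A.2
      (hN k) (β := 16⁻¹ * 16⁻¹ ^ k) (by positivity)
      (by nlinarith [pow_le_one₀ (n := k) (by norm_num : (0 : ℝ) ≤ 16⁻¹) (by norm_num)])
    exact ⟨⟨A', hA'⟩, hclose, by linarith⟩
  choose next hclose hdev using step
  let s : ℕ → {B : Set X // MeasurableSet B} := fun k => Nat.rec ⟨∅, .empty⟩ next k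
  have hlim := MeasurableSet.measurableSet_liminf fun k => (s k).2
  refine ⟨_, hlim, fun k => ?_⟩
  have htail := measureReal_liminf_symmDiff_le (μ := μ) (s := fun k => (s k).1) (by norm_num)
    (by norm_num) (by norm_num) (fun k => hclose k (s k)) (k + 1)
  have hle := birkhoffDeviation_le_add (N := N k) hT.toMeasurePreserving
    (integrable_indicator_one hlim) (integrable_indicator_one (s (k + 1)).2)
  rw [integral_abs_indicator_sub_indicator (s (k + 1)).2 hlim, symmDiff_comm] at hle
  have hdevk : (16 : ℝ)⁻¹ ^ k / 64 ≤ birkhoffDeviation μ T ((s (k + 1)).1.indicator 1) (N k) :=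
    hdev k (s k)
  have h16 : (16 : ℝ)⁻¹ * 16⁻¹ ^ (k + 1) / (1 - 16⁻¹) = 16⁻¹ ^ k / 240 := by
    rw [pow_succ]
    ring
  have hpos : (0 : ℝ) < 16⁻¹ ^ k := by positivity
  linarith

end Construction

/-- For an ergodic automorphism `T` of a nonatomic standard Borel probability space and any
positive sequence `ψ(N) → 0`, there is a measurable set `A` such that, with `f = χ_A` and
`a = μ A`, `limsup_N ‖f_N(T,·) - a‖_{L¹(μ)} / ψ(N) = ∞`. -/
theorem slow_L1_convergence_of_ergodic
    {X : Type*} [MeasurableSpace X] [StandardBorelSpace X]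
    (μ : Measure X) [IsProbabilityMeasure μ] [NullSingletonClass μ]
    (T : X ≃ᵐ X) (hT : Ergodic T μ)
    (ψ : ℕ → ℝ) (hψpos : ∀ N, 0 < ψ N) (hψ0 : Tendsto ψ atTop (nhds 0)) :
    ∃ A : Set X, MeasurableSet A ∧
      ∀ C : ℝ, ∃ᶠ N in atTop,
        C < (∫ x, |birkhoffAvg T (A.indicator (fun _ => (1 : ℝ))) N x - (μ A).toReal| ∂μ)
              / ψ N := by
  have htimes (k : ℕ) : ∃ N, ψ N ≤ (16 : ℝ)⁻¹ ^ k / 160 / (k + 1) ∧ k < N :=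
    ((hψ0.eventually (eventually_le_nhds (by positivity))).and (eventually_gt_atTop k)).exists
  choose N hψN hNk using htimes
  obtain ⟨A, hA, hdev⟩ :=
    hT.exists_measurableSet_forall_birkhoffDeviation_ge N fun k => (Nat.zero_lt_of_lt (hNk k)).ne'
  refine ⟨A, hA, fun C => frequently_atTop.2 fun m => ?_⟩
  obtain ⟨k, hk⟩ := exists_nat_ge (max C m)
  have hmk : m ≤ k := by exact_mod_cast (le_max_right C m).trans hk
  refine ⟨N k, hmk.trans (hNk k).le, ?_⟩
  have hdevk := hdev k
  rw [birkhoffDeviation_indicator hA] at hdevk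
  rw [lt_div_iff₀ (hψpos _)]
  calc C * ψ (N k) ≤ k * ψ (N k) := by gcongr; exacts [(hψpos _).le, (le_max_left C m).trans hk]
    _ < (k + 1) * ψ (N k) := by linarith [hψpos (N k)]
    _ ≤ (16 : ℝ)⁻¹ ^ k / 160 := (le_div_iff₀' (by positivity)).1 (hψN k)
    _ ≤ _ := hdevk
end

section
/- Let T be an automorphism of a probability space (X, μ), let A ⊆ X be measurable, let I be a countable index set, and for each i ∈ I let B_i be the base of a Rokhlin tower of height h(i) for T whose tower X_i = ⋃_{k=0}^{h(i)−1} T^k B_i is disjoint from A, the towers X_i being pairwise disjoint. Set C = ⋃_{i∈I} X_i, fix n ≥ 1, and put f = χ_A. Then μ({x ∈ C : f_n(T, x) ≠ 0}) ≤ n · ∑_{i∈I} μ(B_i). -/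
/-!
A point of a tower at level `k` stays in the tower for the next `h - 1 - k` steps, so if the tower
misses `A` and the orbit of the point meets `A` within `n` steps, the point lies in one of the top
`n` levels. Each level has the measure of the base because `T` is measure preserving, so the top
`n` levels of the `i`-th tower have measure at most `n · μ(Bᵢ)`.
-/

open MeasureTheory Filter Set

theorem exists_iterate_mem_of_birkhoffAvg_indicator_ne_zero {X : Type*} {T : X → X} {A : Set X}
    {n : ℕ} {x : X} (hx : birkhoffAvg T (A.indicator fun _ => (1 : ℝ)) n x ≠ 0) :
    ∃ j ∈ Finset.Icc 1 n, T^[j] x ∈ A := by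
  obtain ⟨j, hj, hjA⟩ := Finset.exists_ne_zero_of_sum_ne_zero (right_ne_zero_of_mul hx)
  exact ⟨j, hj, Set.mem_of_indicator_ne_zero hjA⟩

theorem mem_top_levels_of_birkhoffAvg_indicator_ne_zero {X : Type*} {T : X → X} {A B : Set X}
    {h n : ℕ} (hdisj : Disjoint (⋃ k ∈ Finset.range h, T^[k] '' B) A) {x : X}
    (hx : x ∈ ⋃ k ∈ Finset.range h, T^[k] '' B)
    (hne : birkhoffAvg T (A.indicator fun _ => (1 : ℝ)) n x ≠ 0) :
    x ∈ ⋃ k ∈ Finset.Ico (h - n) h, T^[k] '' B := by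
  simp only [Set.mem_iUnion, Finset.mem_range, Finset.mem_Ico] at hx ⊢
  obtain ⟨k, hk, b, hb, rfl⟩ := hx
  refine ⟨k, ⟨?_, hk⟩, b, hb, rfl⟩
  by_contra! hlow
  obtain ⟨j, hj, hjA⟩ := exists_iterate_mem_of_birkhoffAvg_indicator_ne_zero hne
  rw [Finset.mem_Icc] at hj
  have hjtower : T^[j] (T^[k] b) ∈ ⋃ l ∈ Finset.range h, T^[l] '' B := by
    rw [← Function.iterate_add_apply]
    exact Set.mem_biUnion (Finset.mem_range.2 (by omega)) ⟨b, hb, rfl⟩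
  exact Set.disjoint_left.1 hdisj hjtower hjA

namespace MeasureTheory.MeasurePreserving

variable {X : Type*} [MeasurableSpace X] {μ : Measure X} {T : X ≃ᵐ X}

theorem measure_iterate_image (hT : MeasurePreserving T μ μ) (k : ℕ)
    (s : Set X) : μ ((⇑T)^[k] '' s) = μ s := by
  induction k with
  | zero => simp
  | succ k ih =>
    rw [Function.iterate_succ', Set.image_comp, T.image_eq_preimage_symm,
      hT.symm.measure_preimage_equiv, ih]

theorem measure_biUnion_iterate_image_Ico_le (hT : MeasurePreserving T μ μ)
    (s : Set X) (h n : ℕ) :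
    μ (⋃ k ∈ Finset.Ico (h - n) h, (⇑T)^[k] '' s) ≤ n * μ s :=
  calc μ (⋃ k ∈ Finset.Ico (h - n) h, (⇑T)^[k] '' s)
      ≤ ∑ k ∈ Finset.Ico (h - n) h, μ ((⇑T)^[k] '' s) := measure_biUnion_finset_le _ _
    _ = (Finset.Ico (h - n) h).card * μ s := by
      simp only [measure_iterate_image hT, Finset.sum_const, nsmul_eq_mul]
    _ ≤ n * μ s := by
      gcongr
      rw [Nat.card_Ico]
      omega

end MeasureTheory.MeasurePreserving

theorem measure_birkhoff_ne_zero_on_towers_le_general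
    {X : Type*} [MeasurableSpace X] (μ : Measure X)
    (T : X ≃ᵐ X) (hT : MeasurePreserving T μ μ)
    (A : Set X)
    {I : Type*} [Countable I] (B : I → Set X) (h : I → ℕ)
    (hdisjA : ∀ i, Disjoint (⋃ k ∈ Finset.range (h i), (⇑T)^[k] '' B i) A)
    (n : ℕ) :
    μ {x ∈ ⋃ i, ⋃ k ∈ Finset.range (h i), (⇑T)^[k] '' B i |
        birkhoffAvg T (A.indicator (fun _ => (1 : ℝ))) n x ≠ 0}
      ≤ n * ∑' i, μ (B i) := by
  have hsub : {x ∈ ⋃ i, ⋃ k ∈ Finset.range (h i), (⇑T)^[k] '' B i |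
        birkhoffAvg T (A.indicator (fun _ => (1 : ℝ))) n x ≠ 0}
      ⊆ ⋃ i, ⋃ k ∈ Finset.Ico (h i - n) (h i), (⇑T)^[k] '' B i := by
    rintro x ⟨hxC, hne⟩
    obtain ⟨i, hxi⟩ := Set.mem_iUnion.1 hxC
    exact Set.mem_iUnion.2 ⟨i, mem_top_levels_of_birkhoffAvg_indicator_ne_zero (hdisjA i) hxi hne⟩
  calc _ ≤ μ (⋃ i, ⋃ k ∈ Finset.Ico (h i - n) (h i), (⇑T)^[k] '' B i) := measure_mono hsub
    _ ≤ ∑' i, μ (⋃ k ∈ Finset.Ico (h i - n) (h i), (⇑T)^[k] '' B i) := measure_iUnion_le _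
    _ ≤ ∑' i, n * μ (B i) :=
      ENNReal.tsum_le_tsum fun i => hT.measure_biUnion_iterate_image_Ico_le (B i) (h i) n
    _ = n * ∑' i, μ (B i) := ENNReal.tsum_mul_left

/-- On a disjoint union `C` of Rokhlin towers disjoint from `A`, the Birkhoff average
`f_n(T, ·)` of `f = χ_A` is nonzero only on a set of measure at most `n · ∑ᵢ μ(Bᵢ)`. -/
theorem measure_birkhoff_ne_zero_on_towers_le
    {X : Type*} [MeasurableSpace X] (μ : Measure X) [IsProbabilityMeasure μ]
    (T : X ≃ᵐ X) (hT : MeasurePreserving T μ μ)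
    (A : Set X) (hA : MeasurableSet A)
    {I : Type*} [Countable I] (B : I → Set X) (hB : ∀ i, MeasurableSet (B i))
    (hBpos : ∀ i, 0 < μ (B i)) (h : I → ℕ)
    (htower : ∀ i, ∀ k l, k < h i → l < h i → k ≠ l →
      Disjoint ((⇑T)^[k] '' B i) ((⇑T)^[l] '' B i))
    (hdisjA : ∀ i, Disjoint (⋃ k ∈ Finset.range (h i), (⇑T)^[k] '' B i) A)
    (htowersdisj : ∀ i j, i ≠ j →
      Disjoint (⋃ k ∈ Finset.range (h i), (⇑T)^[k] '' B i)
        (⋃ k ∈ Finset.range (h j), (⇑T)^[k] '' B j))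
    (n : ℕ) (hn : 1 ≤ n) :
    μ {x ∈ ⋃ i, ⋃ k ∈ Finset.range (h i), (⇑T)^[k] '' B i |
        birkhoffAvg T (A.indicator (fun _ => (1 : ℝ))) n x ≠ 0}
      ≤ n * ∑' i, μ (B i) :=
  measure_birkhoff_ne_zero_on_towers_le_general μ T hT A B h hdisjA n
end

section
/- For every sequence ψ : ℕ → ℝ with ψ(N) > 0 for all N and ψ(N) → 0 as N → ∞, there exists a strictly increasing sequence h : ℕ → ℕ of positive integers whose values are jointly coprime (gcd of the set {h(j) : j ≥ 1} equals 1) such that for every j ≥ 1: ψ(h(j)) ≤ 2^{−j−1}/j, and ε_j · h(j) ≤ ψ(h(j))/j, where ε_j = ∑_{i > j} 2^{−i}/h(i). -/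
open MeasureTheory Filter Set

noncomputable def nextH (ψ : ℕ → ℝ) (N : ℕ → ℕ) (j p : ℕ) : ℕ :=
  p * (max (N j) ⌈(j : ℝ) * (2⁻¹ : ℝ) ^ j * p / ψ p⌉₊ + 1) + 1

noncomputable def HH (ψ : ℕ → ℝ) (N : ℕ → ℕ) : ℕ → ℕ
  | 0 => 1
  | j + 1 => nextH ψ N j (HH ψ N j)

lemma HH_pos (ψ : ℕ → ℝ) (N : ℕ → ℕ) : ∀ j, 0 < HH ψ N j
  | 0 => one_pos
  | j + 1 => Nat.succ_pos _

lemma HH_strictMono (ψ : ℕ → ℝ) (N : ℕ → ℕ) : StrictMono (HH ψ N) := by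
  apply strictMono_nat_of_lt_succ
  intro j
  have hp := HH_pos ψ N j
  show HH ψ N j < nextH ψ N j (HH ψ N j)
  unfold nextH
  nlinarith [Nat.zero_le (max (N j) ⌈(j : ℝ) * (2⁻¹ : ℝ) ^ j * (HH ψ N j) / ψ (HH ψ N j)⌉₊)]

lemma le_HH_succ (ψ : ℕ → ℝ) (N : ℕ → ℕ) (j : ℕ) :
    max (N j) ⌈(j : ℝ) * (2⁻¹ : ℝ) ^ j * (HH ψ N j) / ψ (HH ψ N j)⌉₊ ≤ HH ψ N (j + 1) := by
  have hp := HH_pos ψ N j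
  show _ ≤ nextH ψ N j (HH ψ N j)
  unfold nextH
  nlinarith [Nat.zero_le (max (N j) ⌈(j : ℝ) * (2⁻¹ : ℝ) ^ j * (HH ψ N j) / ψ (HH ψ N j)⌉₊)]

/-- Given a positive sequence `ψ(N) → 0`, one can choose strictly increasing, jointly coprime
heights `h j` so that for all `j ≥ 1`: `ψ(h j) ≤ 2^{-j-1}/j` and
`ε_j · h j ≤ ψ(h j)/j`, where `ε_j = ∑_{i > j} 2^{-i}/h i`. -/
theorem exists_heights_for_slow_convergence
    (ψ : ℕ → ℝ) (hψpos : ∀ N, 0 < ψ N) (hψ0 : Tendsto ψ atTop (nhds 0)) :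
    ∃ h : ℕ → ℕ, StrictMono h ∧ (∀ j, 0 < h j) ∧
      (∀ d : ℕ, (∀ j, 1 ≤ j → d ∣ h j) → d = 1) ∧
      ∀ j, 1 ≤ j →
        ψ (h j) ≤ ((2 : ℝ)⁻¹) ^ (j + 1) / j ∧
        (∑' i : ℕ, if j < i then ((2 : ℝ)⁻¹) ^ i / (h i) else 0) * (h j) ≤ ψ (h j) / j := by
  -- choose thresholds N
  have hex : ∀ k : ℕ, ∃ M : ℕ, ∀ n, M ≤ n → ψ n ≤ (2⁻¹ : ℝ) ^ (k + 2) / (k + 1) := by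
    intro k
    have hb : (0 : ℝ) < (2⁻¹ : ℝ) ^ (k + 2) / (k + 1) := by positivity
    have := hψ0.eventually (gt_mem_nhds hb)
    rw [eventually_atTop] at this
    obtain ⟨M, hM⟩ := this
    exact ⟨M, fun n hn => (hM n hn).le⟩
  choose N hN using hex
  set h := HH ψ N with hh
  have hpos := HH_pos ψ N
  have hmono := HH_strictMono ψ N
  refine ⟨h, hmono, hpos, ?_, ?_⟩
  · -- coprimality: h 2 = h 1 * K + 1
    intro d hd
    have h1 := hd 1 le_rfl
    have h2 := hd 2 one_le_two
    obtain ⟨K, hK⟩ : ∃ K, h 2 = h 1 * K + 1 := ⟨_, rfl⟩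
    rw [hK] at h2
    exact Nat.dvd_one.mp ((Nat.dvd_add_right (h1.mul_right _)).mp h2)
  · intro j hj
    have hψh : ψ (h j) ≤ (2⁻¹ : ℝ) ^ (j + 1) / j := by
      obtain ⟨m, rfl⟩ := Nat.exists_eq_add_of_le hj
      have hle : N m ≤ h (1 + m) := by
        have := le_HH_succ ψ N m
        have h2 : m + 1 = 1 + m := by omega
        calc N m ≤ max (N m) _ := le_max_left _ _
          _ ≤ HH ψ N (m + 1) := le_HH_succ ψ N m
          _ = h (1 + m) := by rw [hh, h2]
      have := hN m (h (1 + m)) hle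
      have he : m + 2 = 1 + m + 1 := by omega
      have he2 : ((m : ℝ) + 1) = ((1 + m : ℕ) : ℝ) := by push_cast; ring
      rw [he, he2] at this
      exact this
    refine ⟨hψh, ?_⟩
    -- tail sum bound
    set r : ℝ := (2⁻¹ : ℝ) with hr
    have hr0 : (0 : ℝ) < r := by norm_num
    have hr1 : r < 1 := by norm_num
    have hgeom : Summable (fun i : ℕ => r ^ i) := summable_geometric_of_lt_one hr0.le hr1
    have hHj1pos : (0 : ℝ) < (h (j + 1) : ℝ) := by exact_mod_cast hpos (j + 1)
    have hf_le : ∀ i : ℕ, (if j < i then r ^ i / (h i : ℝ) else 0) ≤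
        (if j < i then r ^ i / (h (j + 1) : ℝ) else 0) := by
      intro i
      by_cases hi : j < i
      · simp only [hi, if_true]
        apply div_le_div_of_nonneg_left (by positivity) hHj1pos
        exact_mod_cast hmono.monotone hi
      · simp [hi]
    have hf_nonneg : ∀ i : ℕ, 0 ≤ (if j < i then r ^ i / (h i : ℝ) else 0) := by
      intro i
      by_cases hi : j < i
      · simp only [hi, if_true]; positivity
      · simp [hi]
    have hg_le_geom : ∀ i : ℕ, (if j < i then r ^ i / (h (j + 1) : ℝ) else 0) ≤ r ^ i := by
      intro i
      by_cases hi : j < i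
      · simp only [hi, if_true]
        apply div_le_self (by positivity)
        exact_mod_cast hpos (j + 1)
      · simp only [hi, if_false]; positivity
    have hg_nonneg : ∀ i : ℕ, 0 ≤ (if j < i then r ^ i / (h (j + 1) : ℝ) else 0) := by
      intro i
      by_cases hi : j < i
      · simp only [hi, if_true]; positivity
      · simp [hi]
    have hg_summable : Summable (fun i : ℕ => if j < i then r ^ i / (h (j + 1) : ℝ) else 0) :=
      Summable.of_nonneg_of_le hg_nonneg hg_le_geom hgeom
    have hf_summable : Summable (fun i : ℕ => if j < i then r ^ i / (h i : ℝ) else 0) :=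
      Summable.of_nonneg_of_le hf_nonneg (fun i => (hf_le i).trans (hg_le_geom i)) hgeom
    -- compute ∑' g = r^j / h (j+1)
    have hgval : (∑' i : ℕ, if j < i then r ^ i / (h (j + 1) : ℝ) else 0)
        = r ^ j / (h (j + 1) : ℝ) := by
      have hsplit := (Summable.sum_add_tsum_nat_add (j + 1) hg_summable).symm
      rw [hsplit]
      have h1 : ∑ i ∈ Finset.range (j + 1), (if j < i then r ^ i / (h (j + 1) : ℝ) else 0) = 0 := by
        apply Finset.sum_eq_zero
        intro i hi
        rw [Finset.mem_range] at hi
        simp [Nat.lt_irrefl, show ¬ j < i by omega]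
      have h2 : (∑' k : ℕ, if j < k + (j + 1) then r ^ (k + (j + 1)) / (h (j + 1) : ℝ) else 0)
          = ∑' k : ℕ, r ^ (k + (j + 1)) / (h (j + 1) : ℝ) := by
        apply tsum_congr
        intro k
        simp [show j < k + (j + 1) by omega]
      rw [h1, h2, zero_add]
      have h3 : ∀ k : ℕ, r ^ (k + (j + 1)) / (h (j + 1) : ℝ)
          = (r ^ (j + 1) / (h (j + 1) : ℝ)) * r ^ k := by
        intro k; rw [pow_add]; ring
      rw [tsum_congr h3, tsum_mul_left, tsum_geometric_of_lt_one hr0.le hr1]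
      rw [hr]
      norm_num
      rw [pow_succ]
      ring
    have hA : (∑' i : ℕ, if j < i then r ^ i / (h i : ℝ) else 0) ≤ r ^ j / (h (j + 1) : ℝ) := by
      rw [← hgval]
      exact Summable.tsum_le_tsum hf_le hf_summable hg_summable
    -- ceiling bound
    have hceil : (j : ℝ) * r ^ j * (h j : ℝ) / ψ (h j) ≤ (h (j + 1) : ℝ) := by
      have h1 : ⌈(j : ℝ) * r ^ j * (h j : ℝ) / ψ (h j)⌉₊ ≤ h (j + 1) :=
        le_trans (le_max_right _ _) (le_HH_succ ψ N j)
      calc (j : ℝ) * r ^ j * (h j : ℝ) / ψ (h j)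
          ≤ (⌈(j : ℝ) * r ^ j * (h j : ℝ) / ψ (h j)⌉₊ : ℝ) := Nat.le_ceil _
        _ ≤ (h (j + 1) : ℝ) := by exact_mod_cast h1
    have hjpos : (0 : ℝ) < (j : ℝ) := by exact_mod_cast hj
    have hψpos' := hψpos (h j)
    have hhjpos : (0 : ℝ) < (h j : ℝ) := by exact_mod_cast hpos j
    have key : r ^ j / (h (j + 1) : ℝ) * (h j : ℝ) ≤ ψ (h j) / j := by
      rw [div_mul_eq_mul_div, div_le_div_iff₀ hHj1pos hjpos]
      have := (div_le_iff₀ hψpos').mp hceil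
      nlinarith
    calc (∑' i : ℕ, if j < i then r ^ i / (h i : ℝ) else 0) * (h j : ℝ)
        ≤ r ^ j / (h (j + 1) : ℝ) * (h j : ℝ) := by
          apply mul_le_mul_of_nonneg_right hA hhjpos.le
      _ ≤ ψ (h j) / j := key
end
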